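/- For every λ ∈ ℂ \ [−1,1]: Re β(λ) = (1/(2π))·arg((λ+1)/(λ−1)) and Im β(λ) = (1/(2π))·ln|(λ−1)/(λ+1)|; consequently |Re β(λ)| < 1/2, and moreover |Re β(λ)| < 1/4 if and only if |λ| > 1. -/

import Mathlib

/-!
With `w = (λ + 1) / (λ - 1)` we have `β = -i · Log w / (2π)`, so `Re β = arg w / (2π)` and
`Im β = -log |w| / (2π)`. Off the segment `[-1, 1]` the point `w` lies in the slit plane, whence
`|arg w| < π`; and `Re w = (|λ|² - 1) / |λ - 1|²`, so `|arg w| < π / 2` exactly when `|λ| > 1`.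
-/

/-- `β(λ) = (1/(2πi))·Log((λ+1)/(λ−1))`, with the principal branch of `Log`. -/
noncomputable def betaFn (lam : ℂ) : ℂ :=
  (1 / (2 * (Real.pi : ℂ) * Complex.I)) * Complex.log ((lam + 1) / (lam - 1))

open Complex Real

theorem betaFn_re (lam : ℂ) : (betaFn lam).re = arg ((lam + 1) / (lam - 1)) / (2 * π) := by
  simp [betaFn, log_im]
  ring

theorem betaFn_im (lam : ℂ) :
    (betaFn lam).im = 1 / (2 * π) * Real.log ‖(lam - 1) / (lam + 1)‖ := by
  rw [← inv_div (lam + 1), norm_inv, Real.log_inv]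
  simp [betaFn, log_re]

theorem re_add_one_div_sub_one (z : ℂ) :
    ((z + 1) / (z - 1)).re = (normSq z - 1) / normSq (z - 1) := by
  simp only [div_re, add_re, add_im, sub_re, sub_im, one_re, one_im, normSq_apply]
  ring

theorem im_add_one_div_sub_one (z : ℂ) :
    ((z + 1) / (z - 1)).im = -2 * z.im / normSq (z - 1) := by
  simp only [div_im, add_re, add_im, sub_re, sub_im, one_re, one_im]
  ring

theorem re_add_one_div_sub_one_pos_iff {z : ℂ} (hz : z ≠ 1) :
    0 < ((z + 1) / (z - 1)).re ↔ 1 < ‖z‖ := by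
  rw [re_add_one_div_sub_one, div_pos_iff_of_pos_right (normSq_pos.mpr (sub_ne_zero.mpr hz)),
    sub_pos, normSq_eq_norm_sq, one_lt_sq_iff₀ (norm_nonneg z)]

theorem add_one_div_sub_one_mem_slitPlane {z : ℂ} (hz : z ∉ ofReal '' Set.Icc (-1 : ℝ) 1) :
    (z + 1) / (z - 1) ∈ slitPlane := by
  rw [mem_slitPlane_iff]
  by_cases him : z.im = 0
  · left
    have hz_real : (z.re : ℂ) = z := ext rfl him.symm
    have hre : 1 < |z.re| := by
      by_contra! h
      exact hz ⟨z.re, abs_le.mp h, hz_real⟩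
    have hz1 : z ≠ 1 := by rintro rfl; simp at hre
    rwa [re_add_one_div_sub_one_pos_iff hz1, ← hz_real, norm_real, Real.norm_eq_abs]
  · right
    have hz1 : z ≠ 1 := by rintro rfl; simp at him
    rw [im_add_one_div_sub_one]
    exact div_ne_zero (mul_ne_zero (by norm_num) him) (normSq_pos.mpr (sub_ne_zero.mpr hz1)).ne'

/-- for `λ ∈ ℂ \ [−1,1]`:
    `Re β = (1/(2π))·arg((λ+1)/(λ−1))`, `Im β = (1/(2π))·ln|(λ−1)/(λ+1)|`,
    `|Re β| < 1/2`, and `|Re β| < 1/4 ↔ |λ| > 1`. -/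
theorem re_im_beta (lam : ℂ)
    (hlam : lam ∉ (Complex.ofReal '' Set.Icc (-1 : ℝ) 1)) :
    (betaFn lam).re = (1 / (2 * Real.pi)) * Complex.arg ((lam + 1) / (lam - 1)) ∧
    (betaFn lam).im = (1 / (2 * Real.pi)) * Real.log ‖(lam - 1) / (lam + 1)‖ ∧
    |(betaFn lam).re| < 1 / 2 ∧
    (|(betaFn lam).re| < 1 / 4 ↔ 1 < ‖lam‖) := by
  set w := (lam + 1) / (lam - 1)
  have hw : w ∈ slitPlane := add_one_div_sub_one_mem_slitPlane hlam
  have hlam1 : lam ≠ 1 := fun h ↦ hlam ⟨1, by norm_num, by simp [h]⟩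
  have habs : |(betaFn lam).re| = |arg w| / (2 * π) := by
    rw [betaFn_re, abs_div, abs_of_pos two_pi_pos]
  refine ⟨by rw [betaFn_re]; ring, betaFn_im lam, ?_, ?_⟩
  · have harg : |arg w| < π :=
      abs_lt.mpr ⟨neg_pi_lt_arg w, (arg_le_pi w).lt_of_ne (slitPlane_arg_ne_pi hw)⟩
    rw [habs, div_lt_iff₀ two_pi_pos]
    linarith
  · calc |(betaFn lam).re| < 1 / 4 ↔ |arg w| < π / 2 := by
          rw [habs, div_lt_iff₀ two_pi_pos]; constructor <;> intro h <;> linarith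
      _ ↔ 0 < w.re := by rw [abs_arg_lt_pi_div_two_iff, or_iff_left (slitPlane_ne_zero hw)]
      _ ↔ 1 < ‖lam‖ := re_add_one_div_sub_one_pos_iff hlam1
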